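/- arXiv:2111.10912 — 6 statements merged into one kernel-verified Lean document; each statement's English description precedes it below -/
import Mathlib

section
/- Let q ≥ t > s ≥ 1 be natural numbers. Define τ(T) = χ_T for T ∈ binom([q], t) and τ(S) = √(t/s)·χ_S for S ∈ binom([q], s), where χ_X denotes the characteristic vector in ℝ^q. If S ⊆ T then ‖τ(T) − τ(S)‖₂² = 2(t − √(ts)); if S ⊄ T then ‖τ(T) − τ(S)‖₂² ≥ 2(t − √(ts))·(1 + 1/(√(ts) − s)). -/
/-- Characteristic vector of a subset of `Fin q`. -/
def chiVec {q : ℕ} (X : Finset (Fin q)) : Fin q → ℝ := fun i => if i ∈ X then 1 else 0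

lemma chi_sum_eq {q : ℕ} (S T : Finset (Fin q)) (r : ℝ) :
    ∑ i, (chiVec T i - r * chiVec S i) ^ 2
      = (T.card : ℝ) + r ^ 2 * S.card - 2 * r * ((T ∩ S).card : ℝ) := by
  have h : ∀ i : Fin q, (chiVec T i - r * chiVec S i) ^ 2
      = chiVec T i + r ^ 2 * chiVec S i - 2 * r * chiVec (T ∩ S) i := by
    intro i
    simp only [chiVec, Finset.mem_inter]
    by_cases h1 : i ∈ T <;> by_cases h2 : i ∈ S <;> simp [h1, h2] <;> ring
  rw [Finset.sum_congr rfl (fun i _ => h i)]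
  rw [Finset.sum_sub_distrib, Finset.sum_add_distrib, ← Finset.mul_sum, ← Finset.mul_sum]
  have hc : ∀ X : Finset (Fin q), ∑ i, chiVec X i = (X.card : ℝ) := by
    intro X
    simp [chiVec, Finset.sum_ite_mem]
  rw [hc, hc, hc]

theorem stmt_1 (q t s : ℕ) (hs : 1 ≤ s) (hst : s < t) (htq : t ≤ q)
    (S T : Finset (Fin q)) (hS : S.card = s) (hT : T.card = t) :
    (S ⊆ T →
      ∑ i, (chiVec T i - Real.sqrt ((t : ℝ) / s) * chiVec S i) ^ 2
        = 2 * ((t : ℝ) - Real.sqrt ((t : ℝ) * s))) ∧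
    (¬ S ⊆ T →
      2 * ((t : ℝ) - Real.sqrt ((t : ℝ) * s)) * (1 + 1 / (Real.sqrt ((t : ℝ) * s) - s))
        ≤ ∑ i, (chiVec T i - Real.sqrt ((t : ℝ) / s) * chiVec S i) ^ 2) := by
  have hs0 : (0:ℝ) < s := by exact_mod_cast hs
  have ht0 : (0:ℝ) < t := by exact_mod_cast (lt_of_le_of_lt (Nat.zero_le s) hst)
  set a := Real.sqrt t with ha_def
  set b := Real.sqrt s with hb_def
  have hb : 0 < b := Real.sqrt_pos.2 hs0
  have ha : 0 < a := Real.sqrt_pos.2 ht0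
  have hab : b < a := Real.sqrt_lt_sqrt hs0.le (by exact_mod_cast hst)
  have ht2 : a ^ 2 = t := Real.sq_sqrt ht0.le
  have hs2 : b ^ 2 = s := Real.sq_sqrt hs0.le
  have hdiv : Real.sqrt ((t:ℝ)/s) = a / b := Real.sqrt_div ht0.le _
  have hmul : Real.sqrt ((t:ℝ)*s) = a * b := Real.sqrt_mul ht0.le _
  have hr2 : (a / b) ^ 2 = (t:ℝ) / s := by rw [div_pow, ht2, hs2]
  constructor
  · intro hsub
    rw [chi_sum_eq, Finset.inter_eq_right.2 hsub, hS, hT, hdiv, hmul, hr2, ← ht2, ← hs2]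
    field_simp
    ring
  · intro hnsub
    have hssub : T ∩ S ⊂ S := by
      refine ⟨Finset.inter_subset_right, fun h => hnsub (fun x hx => ?_)⟩
      exact (Finset.mem_inter.1 (h hx)).1
    have hmlt : (T ∩ S).card < s := hS ▸ Finset.card_lt_card hssub
    have hm : ((T ∩ S).card : ℝ) ≤ b ^ 2 - 1 := by
      rw [hs2]
      have : ((T ∩ S).card : ℝ) + 1 ≤ (s:ℝ) := by exact_mod_cast hmlt
      linarith
    rw [chi_sum_eq, hS, hT, hdiv, hmul, hr2]
    have hts : (t:ℝ) / s * s = t := div_mul_cancel₀ _ hs0.ne'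
    rw [hts, ← ht2, ← hs2]
    have hne : a * b - b ^ 2 ≠ 0 := by nlinarith
    have key : 2 * (a ^ 2 - a * b) * (1 + 1 / (a * b - b ^ 2))
        = 2 * a ^ 2 - 2 * (a / b) * (b ^ 2 - 1) := by
      field_simp [sub_ne_zero.2 hab.ne']
      ring
    rw [key]
    have hpos : 0 < a / b := div_pos ha hb
    nlinarith [mul_le_mul_of_nonneg_left hm hpos.le]
end

section
/- Let q ≥ t ≥ 2 and p ≥ 1 a real number. Define τ(S) = (1/2, …, 1/2) + χ_S ∈ ℝ^q for S ∈ binom([q], t−1) and τ(T) = χ_T for T ∈ binom([q], t). Then for S ⊆ T, ‖τ(T) − τ(S)‖_p = q^{1/p}/2, and for S ⊄ T, ‖τ(T) − τ(S)‖_p ≥ 3/2. Consequently, for every ε > 0 there exists p ∈ ℕ such that the ratio (3/2)/(q^{1/p}/2) = 3/q^{1/p} exceeds 3 − ε. -/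
theorem stmt_3 (q t : ℕ) (ht : 2 ≤ t) (htq : t ≤ q) :
    (∀ p : ℝ, 1 ≤ p → ∀ S T : Finset (Fin q), S.card = t - 1 → T.card = t →
      ((S ⊆ T →
        (∑ i, |chiVec T i - (1 / 2 + chiVec S i)| ^ p) ^ (1 / p) = (q : ℝ) ^ (1 / p) / 2) ∧
       (¬ S ⊆ T →
        (3 : ℝ) / 2 ≤ (∑ i, |chiVec T i - (1 / 2 + chiVec S i)| ^ p) ^ (1 / p)))) ∧
    (∀ ε : ℝ, 0 < ε → ∃ p : ℕ, 3 - ε < 3 / (q : ℝ) ^ (1 / (p : ℝ))) := by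
  have hq : 0 < q := lt_of_lt_of_le (by omega) htq
  constructor
  · intro p hp S T hS hT
    have hp0 : 0 < p := lt_of_lt_of_le one_pos hp
    have hpinv : p * (1 / p) = 1 := by field_simp
    constructor
    · intro hST
      have hterm : ∀ i : Fin q, |chiVec T i - (1 / 2 + chiVec S i)| ^ p = (1/2 : ℝ) ^ p := by
        intro i
        unfold chiVec
        by_cases hiS : i ∈ S
        · have hiT : i ∈ T := hST hiS
          rw [if_pos hiS, if_pos hiT,
            show (1 : ℝ) - (1/2 + 1) = -(1/2) by norm_num, abs_neg,
            abs_of_nonneg (by norm_num)]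
        · by_cases hiT : i ∈ T
          · rw [if_neg hiS, if_pos hiT, show (1 : ℝ) - (1/2 + 0) = 1/2 by norm_num,
              abs_of_nonneg (by norm_num)]
          · rw [if_neg hiS, if_neg hiT, show (0 : ℝ) - (1/2 + 0) = -(1/2) by norm_num,
              abs_neg, abs_of_nonneg (by norm_num)]
      rw [Finset.sum_congr rfl (fun i _ => hterm i)]
      rw [Finset.sum_const, Finset.card_univ, Fintype.card_fin, nsmul_eq_mul]
      rw [Real.mul_rpow (by positivity) (by positivity),
        ← Real.rpow_mul (by norm_num : (0:ℝ) ≤ 1/2), hpinv, Real.rpow_one]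
      ring
    · intro hST
      obtain ⟨i₀, hi₀S, hi₀T⟩ := Finset.not_subset.mp hST
      have hterm : |chiVec T i₀ - (1 / 2 + chiVec S i₀)| ^ p = (3/2 : ℝ) ^ p := by
        unfold chiVec
        rw [if_pos hi₀S, if_neg hi₀T, show (0 : ℝ) - (1/2 + 1) = -(3/2) by norm_num,
          abs_neg, abs_of_nonneg (by norm_num)]
      have hsum : (3/2 : ℝ) ^ p ≤ ∑ i, |chiVec T i - (1 / 2 + chiVec S i)| ^ p := by
        rw [← hterm]
        exact Finset.single_le_sum (f := fun i => |chiVec T i - (1 / 2 + chiVec S i)| ^ p)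
          (fun i _ => by positivity) (Finset.mem_univ i₀)
      calc (3:ℝ)/2 = ((3/2:ℝ) ^ p) ^ (1/p) := by
            rw [← Real.rpow_mul (by norm_num), hpinv, Real.rpow_one]
        _ ≤ _ := Real.rpow_le_rpow (by positivity) hsum (by positivity)
  · intro ε hε
    by_cases h3 : 3 - ε ≤ 0
    · exact ⟨1, lt_of_le_of_lt h3 (by positivity)⟩
    · push_neg at h3
      have hq1 : (1:ℝ) < 3 / (3 - ε) := (one_lt_div h3).mpr (by linarith)
      have hcont : ContinuousAt (fun x : ℝ => (q:ℝ) ^ x) 0 :=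
        Real.continuousAt_const_rpow (by positivity)
      have htend : Filter.Tendsto (fun n : ℕ => (q:ℝ) ^ (1 / (n:ℝ))) Filter.atTop
          (nhds 1) := by
        have := hcont.tendsto.comp tendsto_one_div_atTop_nhds_zero_nat
        simpa [Function.comp_def] using this
      obtain ⟨n, hn⟩ := (htend.eventually_lt_const hq1).exists
      refine ⟨n, ?_⟩
      have hpos : (0:ℝ) < (q:ℝ) ^ (1/(n:ℝ)) := Real.rpow_pos_of_pos (by positivity) _
      rw [lt_div_iff₀ hpos]
      calc (3 - ε) * ((q:ℝ) ^ (1/(n:ℝ))) < (3 - ε) * (3 / (3 - ε)) :=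
            mul_lt_mul_of_pos_left hn (by linarith)
        _ = 3 := by field_simp
end

section
/- Let ε ∈ (0,1) and let p₁, …, pₙ ∈ ℝ^d with n > 4/ε + 1 satisfy ‖p_i − p_j‖₂ ≥ √2 for all i ≠ j. Then for every c ∈ ℝ^d, max_{i ∈ [n]} ‖c − p_i‖₂ ≥ 1 − ε. -/
open Finset in
lemma key_sum {E : Type*} [NormedAddCommGroup E] [InnerProductSpace ℝ E] (n : ℕ) (v : Fin n → E) :
    ∑ i, ∑ j, ‖v i - v j‖^2 =
      2*(n : ℝ)*(∑ i, ‖v i‖^2) - 2*‖∑ i, v i‖^2 := by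
  have h : ∀ i j : Fin n, ‖v i - v j‖^2
      = ‖v i‖^2 + ‖v j‖^2 - 2 * (inner ℝ (v i) (v j) : ℝ) := by
    intro i j
    rw [@norm_sub_sq_real]; ring
  simp_rw [h]
  have hinner : ∑ i, ∑ j, (inner ℝ (v i) (v j) : ℝ) = ‖∑ i, v i‖^2 := by
    rw [← real_inner_self_eq_norm_sq, sum_inner]
    exact Finset.sum_congr rfl fun i _ => (inner_sum _ _ _).symm
  simp_rw [Finset.sum_sub_distrib, Finset.sum_add_distrib, Finset.sum_const,
    Finset.card_fin, ← Finset.mul_sum, hinner]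
  simp only [nsmul_eq_mul, ← Finset.mul_sum]
  ring

theorem stmt_5 (ε : ℝ) (hε : ε ∈ Set.Ioo (0 : ℝ) 1) (d n : ℕ)
    (hn : 4 / ε + 1 < (n : ℝ))
    (p : Fin n → EuclideanSpace ℝ (Fin d))
    (hsep : ∀ i j : Fin n, i ≠ j → Real.sqrt 2 ≤ dist (p i) (p j)) :
    ∀ c : EuclideanSpace ℝ (Fin d), ∃ i : Fin n, 1 - ε ≤ dist c (p i) := by
  obtain ⟨hε0, hε1⟩ := hε
  intro c
  by_contra h
  push_neg at h
  have hn0 : (0:ℝ) < n := by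
    have : (0:ℝ) < 4/ε := by positivity
    linarith
  have hn1 : (1:ℝ) ≤ n := by
    have : (0:ℝ) < 4/ε := by positivity
    linarith
  have hnn : 1 ≤ n := by exact_mod_cast hn1
  set v : Fin n → EuclideanSpace ℝ (Fin d) := fun i => p i - c with hv
  have hnorm : ∀ i, ‖v i‖ < 1 - ε := by
    intro i
    have : ‖v i‖ = dist c (p i) := by rw [dist_comm, dist_eq_norm]
    rw [this]; exact h i
  have hsq : ∀ i, ‖v i‖^2 < (1-ε)^2 := by
    intro i
    exact pow_lt_pow_left₀ (hnorm i) (norm_nonneg _) (by norm_num)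
  have hsum : ∑ i, ‖v i‖^2 < n * (1-ε)^2 := by
    calc ∑ i, ‖v i‖^2 < ∑ _i : Fin n, (1-ε)^2 :=
          Finset.sum_lt_sum_of_nonempty (by
            simpa [Finset.univ_nonempty_iff, ← Fin.pos_iff_nonempty] using
              (by exact_mod_cast hnn : 0 < n)) (fun i _ => hsq i)
      _ = n * (1-ε)^2 := by simp [Finset.sum_const, Finset.card_fin, mul_comm]
  have hsep2 : ∀ i j : Fin n, i ≠ j → (2:ℝ) ≤ ‖v i - v j‖^2 := by
    intro i j hij
    have h1 : Real.sqrt 2 ≤ ‖v i - v j‖ := by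
      have : v i - v j = p i - p j := by simp [hv]
      rw [this, ← dist_eq_norm]; exact hsep i j hij
    calc (2:ℝ) = (Real.sqrt 2)^2 := (Real.sq_sqrt (by norm_num)).symm
      _ ≤ ‖v i - v j‖^2 := pow_le_pow_left₀ (Real.sqrt_nonneg _) h1 2
  have hlow : (n:ℝ) * (((n:ℝ) - 1) * 2) ≤ ∑ i, ∑ j, ‖v i - v j‖^2 := by
    have hin : ∀ i : Fin n, ((n:ℝ) - 1) * 2 ≤ ∑ j, ‖v i - v j‖^2 := by
      intro i
      have h1 : ∑ j ∈ Finset.univ.erase i, (2:ℝ) ≤ ∑ j ∈ Finset.univ.erase i, ‖v i - v j‖^2 :=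
        Finset.sum_le_sum fun j hj => hsep2 i j (Ne.symm (Finset.ne_of_mem_erase hj))
      have h2 : ∑ j ∈ Finset.univ.erase i, ‖v i - v j‖^2 ≤ ∑ j, ‖v i - v j‖^2 :=
        Finset.sum_le_sum_of_subset_of_nonneg (Finset.subset_univ _)
          (fun j _ _ => by positivity)
      have hcard : ((Finset.univ.erase i).card : ℝ) = (n:ℝ) - 1 := by
        rw [Finset.card_erase_of_mem (Finset.mem_univ i), Finset.card_fin]
        rw [Nat.cast_sub hnn]; norm_num
      calc ((n:ℝ) - 1) * 2 = ∑ j ∈ Finset.univ.erase i, (2:ℝ) := by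
            rw [Finset.sum_const, nsmul_eq_mul, hcard]
        _ ≤ _ := le_trans h1 h2
    calc (n:ℝ) * (((n:ℝ) - 1) * 2) = ∑ _i : Fin n, (((n:ℝ) - 1) * 2) := by
          simp [Finset.sum_const, Finset.card_fin]
      _ ≤ _ := Finset.sum_le_sum fun i _ => hin i
  rw [key_sum] at hlow
  have hS : (0:ℝ) ≤ ‖∑ i, v i‖^2 := by positivity
  have hfinal : (n:ℝ) * (((n:ℝ)-1) * 2) < 2*(n:ℝ)*((n:ℝ)*(1-ε)^2) := by
    have := mul_lt_mul_of_pos_left hsum (by positivity : (0:ℝ) < 2*(n:ℝ))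
    linarith
  have hlt : (n:ℝ) - 1 < (n:ℝ) * (1-ε)^2 := by
    have h2n : (0:ℝ) < 2 * n := by positivity
    nlinarith
  have hεn : 4 < ((n:ℝ) - 1) * ε := by
    rw [← div_lt_iff₀ hε0]; linarith
  nlinarith [mul_pos hε0 hn0]
end

section
/- The limit as z → ∞ of the product ∏_{i=1}^{z} (1 − (i−1)/(binom(z,2) − 1)) equals 1/e. -/
open Filter

lemma aux_ratio (a b : ℝ) : Tendsto (fun x : ℝ => (x - a)/(x - b)) atTop (nhds 1) := by
  have h1 : Tendsto (fun x : ℝ => 1 - a * x⁻¹) atTop (nhds 1) := by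
    simpa using tendsto_const_nhds.sub (tendsto_inv_atTop_zero.const_mul a)
  have h2 : Tendsto (fun x : ℝ => 1 - b * x⁻¹) atTop (nhds 1) := by
    simpa using tendsto_const_nhds.sub (tendsto_inv_atTop_zero.const_mul b)
  have h := h1.div h2 one_ne_zero
  rw [div_one] at h
  refine h.congr' ?_
  filter_upwards [eventually_gt_atTop (max (max a b) 0)] with x hx
  have hx0 : x ≠ 0 := ne_of_gt (lt_of_le_of_lt (le_max_right _ _) hx)
  have hxb : x - b ≠ 0 := by
    have : b < x := lt_of_le_of_lt (le_trans (le_max_right a b) (le_max_left _ _)) hx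
    intro h'; nlinarith
  have hd : 1 - b * x⁻¹ ≠ 0 := by
    intro h'
    apply hxb
    field_simp at h'
    nlinarith [h']
  show (1 - a * x⁻¹) / (1 - b * x⁻¹) = (x - a) / (x - b)
  rw [div_eq_div_iff hd hxb]
  have hxx : x * x⁻¹ = 1 := mul_inv_cancel₀ hx0
  linear_combination (b - a) * hxx

lemma aux_choose_atTop : Tendsto (fun z : ℕ => ((z.choose 2 : ℕ) : ℝ)) atTop atTop := by
  apply tendsto_natCast_atTop_atTop.comp
  apply tendsto_atTop_mono (f := fun z : ℕ => z - 1)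
  · intro z
    cases z with
    | zero => simp
    | succ n => rw [Nat.choose_succ_succ, Nat.choose_one_right]; omega
  · exact tendsto_sub_atTop_nat 1


lemma aux_sum (z : ℕ) : ∑ i ∈ Finset.Icc 1 z, ((i:ℝ) - 1) = (z.choose 2 : ℝ) := by
  induction z with
  | zero => simp
  | succ n ih =>
    rw [Finset.sum_Icc_succ_top (by omega : 1 ≤ n+1), ih, Nat.choose_succ_succ]
    push_cast [Nat.choose_one_right]
    ring

lemma aux_bounds (z : ℕ) (hz : 4 ≤ z) :
    Real.exp (-((z.choose 2 : ℝ) / ((z.choose 2 : ℝ) - z))) ≤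
      ∏ i ∈ Finset.Icc 1 z, (1 - ((i : ℝ) - 1) / ((z.choose 2 : ℝ) - 1)) ∧
    ∏ i ∈ Finset.Icc 1 z, (1 - ((i : ℝ) - 1) / ((z.choose 2 : ℝ) - 1)) ≤
      Real.exp (-((z.choose 2 : ℝ) / ((z.choose 2 : ℝ) - 1))) := by
  have hz4 : (4:ℝ) ≤ (z:ℝ) := by exact_mod_cast hz
  have hN : ((z.choose 2 : ℕ):ℝ) = (z:ℝ) * ((z:ℝ) - 1) / 2 := Nat.cast_choose_two ℝ z
  set N : ℝ := ((z.choose 2 : ℕ):ℝ) with hNdef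
  have hD : 0 < N - 1 := by rw [hN]; nlinarith
  have hzN : (z:ℝ) < N := by rw [hN]; nlinarith
  set m : ℝ := ((z:ℝ) - 1) / (N - 1) with hmdef
  have hm0 : 0 ≤ m := by apply div_nonneg (by linarith) (le_of_lt hD)
  have hm1 : m < 1 := by rw [hmdef, div_lt_one hD]; linarith
  have hfac : ∀ i ∈ Finset.Icc 1 z, 0 ≤ ((i:ℝ) - 1) / (N - 1) ∧ ((i:ℝ) - 1) / (N - 1) ≤ m := by
    intro i hi
    simp only [Finset.mem_Icc] at hi
    have h1 : (1:ℝ) ≤ (i:ℝ) := by exact_mod_cast hi.1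
    have h2 : (i:ℝ) ≤ (z:ℝ) := by exact_mod_cast hi.2
    exact ⟨div_nonneg (by linarith) (le_of_lt hD),
      div_le_div_of_nonneg_right (by linarith) hD.le⟩
  constructor
  · -- lower bound
    calc Real.exp (-(N / (N - (z:ℝ))))
        = ∏ i ∈ Finset.Icc 1 z, Real.exp (-(((i:ℝ) - 1) / (N - 1) / (1 - m))) := by
          rw [← Real.exp_sum]
          congr 1
          have hmm : (N - 1) * (1 - m) = N - (z:ℝ) := by
            rw [hmdef]; field_simp; ring
          symm
          simp only [div_div]
          rw [Finset.sum_neg_distrib, ← Finset.sum_div, aux_sum, ← hNdef, hmm]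
      _ ≤ ∏ i ∈ Finset.Icc 1 z, (1 - ((i:ℝ) - 1) / (N - 1)) := by
          apply Finset.prod_le_prod (fun i hi => (Real.exp_pos _).le)
          intro i hi
          obtain ⟨hx0, hxm⟩ := hfac i hi
          set t : ℝ := ((i:ℝ) - 1) / (N - 1)
          have ht1 : t < 1 := lt_of_le_of_lt hxm hm1
          have h1m : 0 < 1 - m := by linarith
          have h1t : 0 < 1 - t := by linarith
          have hst : t / (1 - t) ≤ t / (1 - m) :=
            div_le_div_of_nonneg_left hx0 h1m (by linarith)
          have key : Real.exp (-(t / (1 - t))) ≤ 1 - t := by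
            have h4 := Real.add_one_le_exp (t / (1 - t))
            have h5 : t / (1 - t) + 1 = 1 / (1 - t) := by field_simp; ring
            rw [h5] at h4
            have hpos : 0 < 1 / (1 - t) := by positivity
            have := inv_anti₀ hpos h4
            rw [← Real.exp_neg] at this
            calc Real.exp (-(t / (1 - t))) ≤ (1 / (1 - t))⁻¹ := this
              _ = 1 - t := by field_simp
          calc Real.exp (-(t / (1 - m))) ≤ Real.exp (-(t / (1 - t))) := by
                apply Real.exp_le_exp.2; linarith
            _ ≤ 1 - t := key
  · -- upper bound
    calc ∏ i ∈ Finset.Icc 1 z, (1 - ((i:ℝ) - 1) / (N - 1))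
        ≤ ∏ i ∈ Finset.Icc 1 z, Real.exp (-(((i:ℝ) - 1) / (N - 1))) := by
          apply Finset.prod_le_prod
          · intro i hi
            obtain ⟨hx0, hxm⟩ := hfac i hi
            linarith [lt_of_le_of_lt hxm hm1]
          · intro i hi
            have := Real.add_one_le_exp (-(((i:ℝ) - 1) / (N - 1)))
            linarith
      _ = Real.exp (-(N / (N - 1))) := by
          rw [← Real.exp_sum]
          congr 1
          rw [Finset.sum_neg_distrib, ← Finset.sum_div, aux_sum, ← hNdef]

theorem stmt_9 :
    Filter.Tendsto
      (fun z : ℕ => ∏ i ∈ Finset.Icc 1 z, (1 - ((i : ℝ) - 1) / ((z.choose 2 : ℝ) - 1)))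
      Filter.atTop (nhds (1 / Real.exp 1)) := by
  have hval : (1:ℝ) / Real.exp 1 = Real.exp (-1) := by rw [Real.exp_neg, one_div]
  rw [hval]
  have hcast : Tendsto (fun z : ℕ => (z:ℝ)) atTop atTop := tendsto_natCast_atTop_atTop
  -- lower bound function tendsto
  have h13 : Tendsto (fun z : ℕ => ((z:ℝ) - 1)/((z:ℝ) - 3)) atTop (nhds 1) :=
    (aux_ratio 1 3).comp hcast
  have hg' : Tendsto (fun z : ℕ => Real.exp (-(((z:ℝ) - 1)/((z:ℝ) - 3)))) atTop
      (nhds (Real.exp (-1))) := (Real.continuous_exp.tendsto (-1)).comp h13.neg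
  have hg : Tendsto (fun z : ℕ => Real.exp (-((z.choose 2 : ℝ) / ((z.choose 2 : ℝ) - z))))
      atTop (nhds (Real.exp (-1))) := by
    refine hg'.congr' ?_
    filter_upwards [eventually_ge_atTop 4] with z hz
    have hz4 : (4:ℝ) ≤ (z:ℝ) := by exact_mod_cast hz
    have hN : ((z.choose 2 : ℕ):ℝ) = (z:ℝ) * ((z:ℝ) - 1) / 2 := Nat.cast_choose_two ℝ z
    congr 1
    rw [hN]
    have h3 : (z:ℝ) - 3 ≠ 0 := by intro h; nlinarith
    have h0 : (z:ℝ) ≠ 0 := by intro h; nlinarith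
    have hd2 : (z:ℝ) * ((z:ℝ) - 1) / 2 - (z:ℝ) = (z:ℝ) * ((z:ℝ) - 3) / 2 := by ring
    have hden : (z:ℝ) * ((z:ℝ) - 3) / 2 ≠ 0 := by nlinarith
    rw [hd2, neg_inj, div_eq_div_iff h3 hden]
    ring
  -- upper bound function tendsto
  have h01 : Tendsto (fun z : ℕ => (z.choose 2 : ℝ) / ((z.choose 2 : ℝ) - 1)) atTop (nhds 1) := by
    have := (aux_ratio 0 1).comp aux_choose_atTop
    simpa [Function.comp_def] using this
  have hh : Tendsto (fun z : ℕ => Real.exp (-((z.choose 2 : ℝ) / ((z.choose 2 : ℝ) - 1))))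
      atTop (nhds (Real.exp (-1))) := (Real.continuous_exp.tendsto (-1)).comp h01.neg
  refine tendsto_of_tendsto_of_tendsto_of_le_of_le' hg hh ?_ ?_
  · filter_upwards [eventually_ge_atTop 4] with z hz
    exact (aux_bounds z hz).1
  · filter_upwards [eventually_ge_atTop 4] with z hz
    exact (aux_bounds z hz).2
end

section
/- Fix naturals n ≥ z > y ≥ 0 and a z-element subset T ⊆ [n]. The number of z-element subsets S ⊆ [n] with |S ∩ T| ≥ y + 1 and S ≠ T is at most (z − y) · binom(z, y+1) · n^{z−y−1}. -/
theorem stmt_10 (n z y : ℕ) (hy : 0 ≤ y) (hyz : y < z) (hzn : z ≤ n)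
    (T : Finset (Fin n)) (hT : T.card = z) :
    ((Finset.univ : Finset (Fin n)).powerset.filter
        (fun S => S.card = z ∧ y + 1 ≤ (S ∩ T).card ∧ S ≠ T)).card
      ≤ (z - y) * z.choose (y + 1) * n ^ (z - y - 1) := by
  classical
  set pick : Finset (Fin n) → Finset (Fin n) :=
    fun S => (((S ∩ T).sort (· ≤ ·)).take (y + 1)).toFinset with hpick
  have hpick_sub : ∀ S, pick S ⊆ S ∩ T := by
    intro S x hx
    rw [hpick] at hx
    simp only [List.mem_toFinset] at hx
    have := List.take_subset (y + 1) _ hx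
    rwa [Finset.mem_sort] at this
  have hpick_card : ∀ S, y + 1 ≤ (S ∩ T).card → (pick S).card = y + 1 := by
    intro S hS
    rw [hpick]
    have hnd : (((S ∩ T).sort (· ≤ ·)).take (y + 1)).Nodup :=
      (List.take_sublist _ _).nodup ((S ∩ T).sort_nodup (· ≤ ·))
    rw [List.card_toFinset, hnd.dedup, List.length_take, Finset.length_sort]
    omega
  -- injection into pairs
  have hinj : ((Finset.univ : Finset (Fin n)).powerset.filter
        (fun S => S.card = z ∧ y + 1 ≤ (S ∩ T).card ∧ S ≠ T)).card ≤
      ((T.powersetCard (y + 1)) ×ˢ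
        ((Finset.univ : Finset (Fin n)).powersetCard (z - y - 1))).card := by
    apply Finset.card_le_card_of_injOn (fun S => (pick S, S \ pick S))
    · intro S hS
      simp only [Finset.mem_coe, Finset.mem_filter, Finset.mem_powerset] at hS
      obtain ⟨-, hcard, hint, -⟩ := hS
      have h1 : pick S ⊆ S ∩ T := hpick_sub S
      have h2 : (pick S).card = y + 1 := hpick_card S hint
      simp only [Finset.mem_coe, Finset.mem_product, Finset.mem_powersetCard]
      refine ⟨⟨h1.trans (Finset.inter_subset_right), h2⟩,
        ⟨Finset.subset_univ _, ?_⟩⟩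
      rw [Finset.card_sdiff_of_subset (h1.trans Finset.inter_subset_left), hcard, h2]
      omega
    · intro S hS S' hS' heq
      simp only [Finset.mem_coe, Finset.mem_filter, Finset.mem_powerset, Prod.mk.injEq] at hS hS' heq
      obtain ⟨hpe, hde⟩ := heq
      have e1 : S = pick S ∪ (S \ pick S) := by
        rw [Finset.union_sdiff_of_subset ((hpick_sub S).trans Finset.inter_subset_left)]
      have e2 : S' = pick S' ∪ (S' \ pick S') := by
        rw [Finset.union_sdiff_of_subset ((hpick_sub S').trans Finset.inter_subset_left)]
      rw [hpe] at hde
      rw [e1, e2, hpe, hde]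
  refine hinj.trans ?_
  rw [Finset.card_product, Finset.card_powersetCard, Finset.card_powersetCard, hT,
    Finset.card_univ, Fintype.card_fin]
  calc z.choose (y + 1) * n.choose (z - y - 1)
      ≤ z.choose (y + 1) * n ^ (z - y - 1) :=
        Nat.mul_le_mul_left _ (Nat.choose_le_pow n (z - y - 1))
    _ ≤ (z - y) * z.choose (y + 1) * n ^ (z - y - 1) := by
        have : 1 ≤ z - y := by omega
        calc z.choose (y + 1) * n ^ (z - y - 1)
            = 1 * (z.choose (y + 1) * n ^ (z - y - 1)) := by ring
          _ ≤ (z - y) * (z.choose (y + 1) * n ^ (z - y - 1)) :=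
              Nat.mul_le_mul_right _ this
          _ = (z - y) * z.choose (y + 1) * n ^ (z - y - 1) := by ring
end

section
/- Let ℓ ≥ 2 and let α : [ℓ] → [0,1]. Let D_I be the distribution on [ℓ] where i is sampled with probability proportional to (ℓ−i)², i.e., with probability 6(ℓ−i)²/(ℓ(ℓ−1)(2ℓ−1)). Then E_{i ∼ D_I, j, k uniform on {i+1,…,ℓ}} [α(i)·α(j)·α(k)] ≥ (E_{i uniform on [ℓ]}[α(i)])³ − 3/ℓ. -/
theorem stmt_16 (ℓ : ℕ) (hℓ : 2 ≤ ℓ) (α : ℕ → ℝ)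
    (hα : ∀ i ∈ Finset.Icc 1 ℓ, α i ∈ Set.Icc (0 : ℝ) 1) :
    ((1 / (ℓ : ℝ)) * ∑ i ∈ Finset.Icc 1 ℓ, α i) ^ 3 - 3 / (ℓ : ℝ)
      ≤ ∑ i ∈ Finset.Icc 1 ℓ,
          (6 * ((ℓ : ℝ) - i) ^ 2 / ((ℓ : ℝ) * ((ℓ : ℝ) - 1) * (2 * (ℓ : ℝ) - 1))) *
            ((∑ j ∈ Finset.Icc (i + 1) ℓ, ∑ k ∈ Finset.Icc (i + 1) ℓ,
                α i * α j * α k) / ((ℓ : ℝ) - i) ^ 2) := by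
  have hℓR : (2:ℝ) ≤ (ℓ:ℝ) := by exact_mod_cast hℓ
  set B : ℕ → ℝ := fun i => ∑ j ∈ Finset.Icc (i+1) ℓ, α j with hB
  set A : ℕ → ℝ := fun i => ∑ j ∈ Finset.Icc i ℓ, α j with hA
  set D : ℝ := (ℓ:ℝ) * ((ℓ:ℝ) - 1) * (2*(ℓ:ℝ)-1) with hD
  have hD0 : 0 < D := by
    apply mul_pos (mul_pos (by linarith) (by linarith)); linarith
  -- the double sum
  have hdouble : ∀ i, (∑ j ∈ Finset.Icc (i+1) ℓ, ∑ k ∈ Finset.Icc (i+1) ℓ,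
      α i * α j * α k) = α i * B i ^ 2 := by
    intro i
    simp only [hB]
    simp_rw [mul_assoc, ← Finset.mul_sum, ← Finset.sum_mul]
    ring
  -- rewrite RHS summands
  have hsum : ∀ i ∈ Finset.Icc 1 ℓ,
      (6 * ((ℓ:ℝ) - i)^2 / D) *
        ((∑ j ∈ Finset.Icc (i+1) ℓ, ∑ k ∈ Finset.Icc (i+1) ℓ, α i * α j * α k)
          / ((ℓ:ℝ)-i)^2)
      = (6 / D) * (α i * B i ^ 2) := by
    intro i hi
    rw [hdouble]
    rcases eq_or_lt_of_le (Finset.mem_Icc.mp hi).2 with h | h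
    · have hB0 : B i = 0 := by
        simp [hB, h, Finset.Icc_eq_empty_of_lt (Nat.lt_succ_self ℓ)]
      simp [hB0]
    · have hne : ((ℓ:ℝ) - i) ≠ 0 := by
        have : (i:ℝ) < ℓ := by exact_mod_cast h
        linarith
      field_simp
  rw [Finset.sum_congr rfl hsum, ← Finset.mul_sum]
  set T : ℝ := ∑ i ∈ Finset.Icc 1 ℓ, α i * B i ^ 2 with hT
  -- basic bounds on α and B
  have hα0 : ∀ i ∈ Finset.Icc 1 ℓ, 0 ≤ α i := fun i hi => (hα i hi).1
  have hα1 : ∀ i ∈ Finset.Icc 1 ℓ, α i ≤ 1 := fun i hi => (hα i hi).2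
  have hBnn : ∀ i, 0 ≤ B i := by
    intro i
    apply Finset.sum_nonneg
    intro j hj
    have hj' := Finset.mem_Icc.mp hj
    exact hα0 j (Finset.mem_Icc.mpr ⟨by omega, hj'.2⟩)
  have hBle : ∀ i ∈ Finset.Icc 1 ℓ, B i ≤ (ℓ:ℝ) - 1 := by
    intro i hi
    have h1 : B i ≤ (Finset.Icc (i+1) ℓ).card • (1:ℝ) := by
      apply Finset.sum_le_card_nsmul
      intro j hj
      have hj' := Finset.mem_Icc.mp hj
      exact hα1 j (Finset.mem_Icc.mpr ⟨by omega, hj'.2⟩)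
    have h2 : (Finset.Icc (i+1) ℓ).card = ℓ - i := by
      rw [Nat.card_Icc]; omega
    have hi1 : 1 ≤ i := (Finset.mem_Icc.mp hi).1
    have h3 : ((ℓ - i : ℕ) : ℝ) ≤ (ℓ:ℝ) - 1 := by
      have h4 : (ℓ - i : ℕ) ≤ ℓ - 1 := by omega
      calc ((ℓ - i : ℕ) : ℝ) ≤ ((ℓ - 1 : ℕ) : ℝ) := by exact_mod_cast h4
        _ = (ℓ:ℝ) - 1 := by
          have h5 : (1:ℕ) ≤ ℓ := by omega
          push_cast [h5]; ring
    calc B i ≤ (Finset.Icc (i+1) ℓ).card • (1:ℝ) := h1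
      _ = ((ℓ - i : ℕ) : ℝ) := by rw [h2]; simp
      _ ≤ (ℓ:ℝ) - 1 := h3
  have hTnn : 0 ≤ T := by
    apply Finset.sum_nonneg
    intro i hi
    exact mul_nonneg (hα0 i hi) (sq_nonneg _)
  -- A i = α i + A (i+1) for i in range
  have hAstep : ∀ i ∈ Finset.Icc 1 ℓ, A i = α i + A (i+1) := by
    intro i hi
    have hil : i ≤ ℓ := (Finset.mem_Icc.mp hi).2
    have hins : Finset.Icc i ℓ = insert i (Finset.Icc (i+1) ℓ) := by
      ext x; simp [Finset.mem_Icc, Finset.mem_insert]; omega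
    simp only [hA]
    rw [hins, Finset.sum_insert (by simp)]
  have hAeqB : ∀ i, A (i+1) = B i := fun i => rfl
  -- telescoping
  have htel : (A 1)^3 - (A (ℓ+1))^3
      = ∑ i ∈ Finset.Icc 1 ℓ, ((A i)^3 - (A (i+1))^3) := by
    rw [← Finset.Ico_add_one_right_eq_Icc, Finset.sum_Ico_eq_sum_range]
    simp only [Nat.add_sub_cancel]
    simp_rw [show ∀ k:ℕ, 1+k+1 = 1+(k+1) from fun k => rfl]
    rw [Finset.sum_range_sub' (fun i => (A (1+i))^3)]
    norm_num [Nat.add_comm]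
  have hAtop : A (ℓ+1) = 0 := by
    simp [hA, Finset.Icc_eq_empty_of_lt (Nat.lt_succ_self ℓ)]
  -- per-term bound
  have hterm : ∀ i ∈ Finset.Icc 1 ℓ,
      (A i)^3 - (A (i+1))^3 ≤ 3 * (α i * B i ^ 2) + 3 * (ℓ:ℝ) := by
    intro i hi
    rw [hAstep i hi, hAeqB]
    have h0 := hα0 i hi
    have h1 := hα1 i hi
    have h2 := hBnn i
    have h3 := hBle i hi
    nlinarith [sq_nonneg (B i), mul_nonneg h0 h2, sq_nonneg (α i)]
  have hsum2 : (A 1)^3 ≤ 3 * T + 3 * (ℓ:ℝ) * (ℓ:ℝ) := by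
    have := Finset.sum_le_sum hterm
    rw [← htel] at this
    rw [hAtop] at this
    have hcard : (Finset.Icc 1 ℓ).card = ℓ := by rw [Nat.card_Icc]; omega
    rw [Finset.sum_add_distrib, Finset.sum_const, hcard, ← Finset.mul_sum] at this
    simp only [nsmul_eq_mul] at this
    rw [← hT] at this
    linarith [this]
  -- final arithmetic
  have hS : ∑ i ∈ Finset.Icc 1 ℓ, α i = A 1 := rfl
  rw [hS]
  have hℓ0 : (0:ℝ) < (ℓ:ℝ) := by linarith
  have hℓ3 : (0:ℝ) < (ℓ:ℝ)^3 := by positivity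
  have key1 : ((1/(ℓ:ℝ)) * A 1)^3 - 3/(ℓ:ℝ) ≤ 3 * T / (ℓ:ℝ)^3 := by
    have h1 : ((1/(ℓ:ℝ)) * A 1)^3 = (A 1)^3 / (ℓ:ℝ)^3 := by
      field_simp
    rw [h1]
    rw [div_sub_div _ _ (ne_of_gt hℓ3) (ne_of_gt hℓ0), div_le_div_iff₀ (by positivity) hℓ3]
    nlinarith [mul_le_mul_of_nonneg_right hsum2 (le_of_lt (mul_pos hℓ3 hℓ0)), hℓ0, hℓ3]
  have hD2 : D ≤ 2*(ℓ:ℝ)^3 := by rw [hD]; nlinarith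
  have key2 : 3 * T / (ℓ:ℝ)^3 ≤ 6 / D * T := by
    have h6 : 6 / D * T = 6 * T / D := by ring
    rw [h6, div_le_div_iff₀ hℓ3 hD0]
    nlinarith [mul_nonneg hTnn (sub_nonneg.mpr hD2)]
  linarith
end
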